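/- arXiv:1111.1901 — 3 statements merged into one kernel-verified Lean document; each statement's English description precedes it below -/
import Mathlib

section
/- For the Wigner link function L_W and any Catalan word w of length 2t, lim_{n→∞} #Π*_{L_W,n}(w)/n^{t+1} = 1. -/
open Filter Topology

/-- A word `w` of length `h` (a function from positions to letters) is
pair-matched if every letter occurs exactly twice. -/
def PairMatched {h : ℕ} (w : Fin h → ℕ) : Prop :=
  ∀ i, (Finset.univ.filter fun j => w j = w i).card = 2

/-- A word is reducible to the empty word by successively removing adjacent
double letters. -/
inductive CatalanReducible : List ℕ → Prop
  | nil : CatalanReducible []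
  | step (l₁ l₂ : List ℕ) (a : ℕ) :
      CatalanReducible (l₁ ++ l₂) → CatalanReducible (l₁ ++ a :: a :: l₂)

/-- A word (as a function) is Catalan if its list of letters is reducible to
the empty word by successive removal of adjacent double letters. -/
def CatalanWord {h : ℕ} (w : Fin h → ℕ) : Prop := CatalanReducible (List.ofFn w)

/-- `Π*_{L_T,n}(w)`: circuits `π : {0,…,2t} → {1,…,n}` (coded by `Fin n`) with
`π(0) = π(2t)` such that matching letters of `w` force equal absolute
increments `|π(i−1) − π(i)|`. -/
def toepStar (t n : ℕ) (w : Fin (2 * t) → ℕ) : Set (Fin (2 * t + 1) → Fin n) :=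
  {π | π 0 = π (Fin.last (2 * t)) ∧ ∀ i j : Fin (2 * t), w i = w j →
    ((π i.castSucc : ℤ) - (π i.succ : ℤ)).natAbs
      = ((π j.castSucc : ℤ) - (π j.succ : ℤ)).natAbs}

/-- `Π*_{L_W,n}(w)`: circuits with `π(0) = π(2t)` such that matching letters of
`w` force equal Wigner link values `(min, max)` of consecutive entries. -/
def wignerStar (t n : ℕ) (w : Fin (2 * t) → ℕ) : Set (Fin (2 * t + 1) → Fin n) :=
  {π | π 0 = π (Fin.last (2 * t)) ∧ ∀ i j : Fin (2 * t), w i = w j →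
    (min (π i.castSucc) (π i.succ), max (π i.castSucc) (π i.succ))
      = (min (π j.castSucc) (π j.succ), max (π j.castSucc) (π j.succ))}

/-- Position `i` is a generating vertex of `w`: the first occurrence of its letter. -/
def IsGen {h : ℕ} (w : Fin h → ℕ) (i : Fin h) : Prop := ∀ j, w j = w i → i ≤ j

/-- `Π*_{L_T,n,l}(w)`: circuits in `Π*_{L_T,n}(w)` such that for every
generating vertex `i` with matching position `j`,
`π(i−1) − π(i) = l_i · (π(j−1) − π(j))`. -/
def toepStarSigned (t n : ℕ) (w : Fin (2 * t) → ℕ) (l : Fin (2 * t) → ℤ) :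
    Set (Fin (2 * t + 1) → Fin n) :=
  {π | π ∈ toepStar t n w ∧ ∀ i j : Fin (2 * t), IsGen w i → i ≠ j → w j = w i →
    (π i.castSucc : ℤ) - (π i.succ : ℤ) = l i * ((π j.castSucc : ℤ) - (π j.succ : ℤ))}

/-!
A Catalan word `w` of length `2t + 2` contains an adjacent double letter `aa` whose removal
leaves a Catalan word `w'`, and pair-matching says that `a` occurs nowhere else. In a circuit
`π ∈ Π*_{L_W,n}(w)` the two steps labelled `a` have the same Wigner link; since the links of
`(x, y)` and `(y, z)` agree only when `x = z`, the circuit makes an excursion `x → c → x` there.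
Cutting out the excursion is a bijection `Π*_{L_W,n}(w) ≃ [n] × Π*_{L_W,n}(w')`, so
`#Π*_{L_W,n}(w) = n ^ (t + 1)` for every `n`, and the ratio is eventually `1`.
-/

open Function

def skipPair {m : ℕ} (k : Fin (m + 1)) : Fin m → Fin (m + 2) := k.succ.succAbove ∘ k.succAbove

section

variable {m : ℕ}

lemma val_skipPair (k : Fin (m + 1)) (i : Fin m) :
    (skipPair k i : ℕ) = if (i : ℕ) < k then (i : ℕ) else (i : ℕ) + 2 := by
  simp only [skipPair, comp_apply, Fin.succAbove, Fin.lt_def]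
  split_ifs <;> simp_all; omega

lemma skipPair_injective (k : Fin (m + 1)) : Injective (skipPair k) :=
  Fin.succAbove_right_injective.comp Fin.succAbove_right_injective

lemma exists_skipPair_eq_iff {k : Fin (m + 1)} {p : Fin (m + 2)} :
    (∃ i, skipPair k i = p) ↔ p ≠ k.castSucc ∧ p ≠ k.succ := by
  constructor
  · rintro ⟨i, rfl⟩
    refine ⟨fun h => ?_, Fin.succAbove_ne _ _⟩
    rw [← Fin.succAbove_succ_self, skipPair, comp_apply, Fin.succAbove_right_inj] at h
    exact Fin.succAbove_ne _ _ h
  · rintro ⟨hp, hp'⟩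
    obtain ⟨q, rfl⟩ := Fin.exists_succAbove_eq hp'
    obtain ⟨i, rfl⟩ := Fin.exists_succAbove_eq (x := q) (y := k)
      (by rintro rfl; exact hp (Fin.succAbove_succ_self q))
    exact ⟨i, rfl⟩

lemma skipPair_succ_succ (k : Fin (m + 1)) (i : Fin m) :
    skipPair k.succ i.succ = (skipPair k i).succ := by
  simp [skipPair]

lemma skipPair_succ_self (k : Fin (m + 1)) : skipPair k.succ k = k.castSucc.castSucc := by
  ext; simp [val_skipPair]

end

lemma min_max_eq_min_max_iff {α : Type*} [LinearOrder α] {x y z : α} :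
    (min x y, max x y) = (min y z, max y z) ↔ x = z := by
  refine ⟨fun h => ?_, fun h => by rw [h, min_comm, max_comm]⟩
  simp only [Prod.mk.injEq] at h
  grind

section

variable {m : ℕ} {w : Fin (m + 2) → ℕ} {k : Fin (m + 1)}

lemma PairMatched.eq_iff_of_adjacent (hw : PairMatched w) (hk : w k.castSucc = w k.succ)
    (j : Fin (m + 2)) : w j = w k.castSucc ↔ j = k.castSucc ∨ j = k.succ := by
  have hsub : {k.castSucc, k.succ} ⊆ Finset.univ.filter fun j => w j = w k.castSucc := by
    simp [Finset.insert_subset_iff, hk]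
  have hcard := Finset.eq_of_subset_of_card_le hsub <| by
    rw [hw, Finset.card_pair (Fin.castSucc_lt_succ (i := k)).ne]
  simpa using (Finset.ext_iff.1 hcard j).symm

lemma PairMatched.comp_skipPair (hw : PairMatched w) (hk : w k.castSucc = w k.succ) :
    PairMatched (w ∘ skipPair k) := by
  intro i
  refine Eq.trans ?_ (hw (skipPair k i))
  refine Finset.card_nbij (skipPair k) (fun j hj => by simpa using hj)
    (skipPair_injective k).injOn fun p hp => ?_
  have hp : w p = w (skipPair k i) := by simpa using hp
  have hi := (exists_skipPair_eq_iff (k := k)).1 ⟨i, rfl⟩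
  obtain ⟨j, rfl⟩ := exists_skipPair_eq_iff.2 <| not_or.1 fun hpair => not_or.2 hi <|
    (hw.eq_iff_of_adjacent hk _).1 (hp.symm.trans ((hw.eq_iff_of_adjacent hk p).2 hpair))
  exact ⟨j, by simpa using hp, rfl⟩

lemma CatalanWord.exists_adjacent_eq (hc : CatalanWord w) :
    ∃ k : Fin (m + 1), w k.castSucc = w k.succ ∧ CatalanWord (w ∘ skipPair k) := by
  unfold CatalanWord at hc
  generalize hL : List.ofFn w = L at hc
  cases hc with
  | nil => simpa using congrArg List.length hL
  | step l₁ l₂ a hred =>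
    have hlen : l₁.length + l₂.length = m := by
      have := congrArg List.length hL
      simp at this
      omega
    have hw : ∀ p : Fin (m + 2), w p = (l₁ ++ a :: a :: l₂)[(p : ℕ)]'(by simp; omega) :=
      fun p => by simp only [← hL, List.getElem_ofFn]
    refine ⟨⟨l₁.length, by omega⟩, ?_, ?_⟩
    · simp [hw, List.getElem_append_right]
    · unfold CatalanWord
      convert hred using 1
      refine List.ext_getElem (by simp; omega) fun i h₁ h₂ => ?_
      rw [List.getElem_ofFn, comp_apply, hw]
      by_cases h : i < l₁.length
      · simp [val_skipPair, h, List.getElem_append_left]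
      · simp only [val_skipPair, h, if_false]
        rw [List.getElem_append_right (by omega), List.getElem_append_right (by omega)]
        simp [Nat.sub_add_comm (not_lt.1 h)]

end

section

variable {α : Type*} {m : ℕ}

def wignerEdge [LinearOrder α] (π : Fin (m + 1) → α) (i : Fin m) : α × α :=
  (min (π i.castSucc) (π i.succ), max (π i.castSucc) (π i.succ))

lemma mem_wignerStar {t n : ℕ} {w : Fin (2 * t) → ℕ} {π : Fin (2 * t + 1) → Fin n} :
    π ∈ wignerStar t n w ↔
      π 0 = π (Fin.last _) ∧ ∀ i j, w i = w j → wignerEdge π i = wignerEdge π j :=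
  Iff.rfl

lemma wignerEdge_castSucc_eq_succ_iff [LinearOrder α] {π : Fin (m + 2 + 1) → α}
    {k : Fin (m + 1)} :
    wignerEdge π k.castSucc = wignerEdge π k.succ ↔ π k.castSucc.castSucc = π k.succ.succ := by
  rw [wignerEdge, wignerEdge, Fin.succ_castSucc, min_max_eq_min_max_iff]

lemma comp_skipPair_castSucc {π : Fin (m + 2 + 1) → α} {k : Fin (m + 1)}
    (hπ : π k.castSucc.castSucc = π k.succ.succ) (i : Fin m) :
    π (skipPair k.succ i.castSucc) = π (skipPair k i).castSucc := by
  by_cases h : (i : ℕ) = k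
  · convert hπ using 2 <;> ext <;> simp [val_skipPair, h]
  · congr 1
    ext
    simp only [val_skipPair, Fin.val_castSucc, Fin.val_succ]
    split_ifs <;> omega

lemma wignerEdge_comp_skipPair [LinearOrder α] {π : Fin (m + 2 + 1) → α} {k : Fin (m + 1)}
    (hπ : π k.castSucc.castSucc = π k.succ.succ) (i : Fin m) :
    wignerEdge (π ∘ skipPair k.succ) i = wignerEdge π (skipPair k i) := by
  simp only [wignerEdge, comp_apply, comp_skipPair_castSucc hπ, skipPair_succ_succ]

lemma comp_skipPair_last {π : Fin (m + 2 + 1) → α} {k : Fin (m + 1)}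
    (hπ : π k.castSucc.castSucc = π k.succ.succ) :
    π (skipPair k.succ (Fin.last m)) = π (Fin.last (m + 2)) := by
  by_cases h : (k : ℕ) = m
  · convert hπ using 2 <;> ext <;> simp [val_skipPair, h]
  · congr 1; ext; simp [val_skipPair]; omega

lemma skipPair_succ_zero (k : Fin (m + 1)) : skipPair k.succ 0 = 0 := by
  ext; simp [val_skipPair]

/-- The path `ρ` with the excursion `ρ k → c → ρ k` inserted after its `k`-th vertex. -/
def detour (k : Fin (m + 1)) (c : α) (ρ : Fin (m + 1) → α) : Fin (m + 2 + 1) → α :=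
  Fin.insertNth k.succ.succ (ρ k) (Fin.insertNth k.succ c ρ)

lemma detour_comp_skipPair (k : Fin (m + 1)) (c : α) (ρ : Fin (m + 1) → α) :
    detour k c ρ ∘ skipPair k.succ = ρ := by
  rw [detour, skipPair, ← comp_assoc, Fin.insertNth_comp_succAbove, Fin.insertNth_comp_succAbove]

lemma detour_apply_succ (k : Fin (m + 1)) (c : α) (ρ : Fin (m + 1) → α) :
    detour k c ρ k.succ.castSucc = c := by
  rw [detour, ← Fin.succAbove_succ_self, Fin.insertNth_apply_succAbove, Fin.insertNth_apply_same]

lemma detour_castSucc_castSucc (k : Fin (m + 1)) (c : α) (ρ : Fin (m + 1) → α) :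
    detour k c ρ k.castSucc.castSucc = detour k c ρ k.succ.succ := by
  rw [← skipPair_succ_self, ← comp_apply (f := detour k c ρ), detour_comp_skipPair, detour,
    Fin.insertNth_apply_same]

lemma detour_eq_self {π : Fin (m + 2 + 1) → α} {k : Fin (m + 1)}
    (hπ : π k.castSucc.castSucc = π k.succ.succ) :
    detour k (π k.succ.castSucc) (π ∘ skipPair k.succ) = π := by
  rw [detour, Fin.insertNth_eq_iff, Fin.insertNth_eq_iff]
  refine ⟨?_, ?_, rfl⟩
  · rw [comp_apply, skipPair_succ_self, hπ]
  · simp [Fin.removeNth]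

end

section

variable {t n : ℕ} {w : Fin (2 * (t + 1)) → ℕ} {k : Fin (2 * t + 1)}

lemma comp_skipPair_mem_wignerStar_iff
    (hk : ∀ j, w j = w k.castSucc ↔ j = k.castSucc ∨ j = k.succ)
    {π : Fin (2 * (t + 1) + 1) → Fin n} (hπ : π k.castSucc.castSucc = π k.succ.succ) :
    π ∘ skipPair k.succ ∈ wignerStar t n (w ∘ skipPair k) ↔ π ∈ wignerStar (t + 1) n w := by
  have hpair : ∀ p, p = k.castSucc ∨ p = k.succ → wignerEdge π p = wignerEdge π k.castSucc := by
    rintro p (rfl | rfl)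
    exacts [rfl, (wignerEdge_castSucc_eq_succ_iff.2 hπ).symm]
  simp only [mem_wignerStar, comp_apply, skipPair_succ_zero, comp_skipPair_last hπ,
    wignerEdge_comp_skipPair hπ]
  refine and_congr_right fun _ => ⟨fun h i j hij => ?_, fun h i j hij => h _ _ hij⟩
  by_cases hi : i = k.castSucc ∨ i = k.succ
  · rw [hpair i hi, hpair j ((hk j).1 (hij.symm.trans ((hk i).2 hi)))]
  · have hj : ¬(j = k.castSucc ∨ j = k.succ) := fun hj =>
      hi ((hk i).1 (hij.trans ((hk j).2 hj)))
    obtain ⟨i, rfl⟩ := exists_skipPair_eq_iff.2 (not_or.1 hi)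
    obtain ⟨j, rfl⟩ := exists_skipPair_eq_iff.2 (not_or.1 hj)
    exact h i j hij

lemma apply_castSucc_castSucc_eq_of_mem_wignerStar {π : Fin (2 * (t + 1) + 1) → Fin n}
    (hπ : π ∈ wignerStar (t + 1) n w) (hk : w k.castSucc = w k.succ) :
    π k.castSucc.castSucc = π k.succ.succ :=
  wignerEdge_castSucc_eq_succ_iff.1 (hπ.2 _ _ hk)

def wignerStarDetourEquiv (hk : ∀ j, w j = w k.castSucc ↔ j = k.castSucc ∨ j = k.succ) :
    wignerStar (t + 1) n w ≃ Fin n × wignerStar t n (w ∘ skipPair k) :=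
  have hπ (π : wignerStar (t + 1) n w) : π.1 k.castSucc.castSucc = π.1 k.succ.succ :=
    apply_castSucc_castSucc_eq_of_mem_wignerStar π.2 ((hk _).2 (Or.inr rfl)).symm
  { toFun π := (π.1 k.succ.castSucc,
      ⟨π.1 ∘ skipPair k.succ, (comp_skipPair_mem_wignerStar_iff hk (hπ π)).2 π.2⟩)
    invFun x := ⟨detour k x.1 x.2.1, (comp_skipPair_mem_wignerStar_iff hk
      (detour_castSucc_castSucc _ _ _)).1 (by rw [detour_comp_skipPair]; exact x.2.2)⟩
    left_inv π := Subtype.ext (detour_eq_self (hπ π))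
    right_inv x :=
      Prod.ext (detour_apply_succ _ _ _) (Subtype.ext (detour_comp_skipPair _ _ _)) }

lemma ncard_wignerStar_succ (hk : ∀ j, w j = w k.castSucc ↔ j = k.castSucc ∨ j = k.succ) :
    (wignerStar (t + 1) n w).ncard = n * (wignerStar t n (w ∘ skipPair k)).ncard := by
  rw [← Nat.card_coe_set_eq, Nat.card_congr (wignerStarDetourEquiv hk), Nat.card_prod,
    Nat.card_eq_fintype_card, Fintype.card_fin, Nat.card_coe_set_eq]

end

lemma ncard_wignerStar_of_catalan {t : ℕ} (n : ℕ) {w : Fin (2 * t) → ℕ} (hw : PairMatched w)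
    (hc : CatalanWord w) : (wignerStar t n w).ncard = n ^ (t + 1) := by
  induction t with
  | zero =>
    have : wignerStar 0 n w = Set.univ :=
      Set.eq_univ_of_forall fun π => ⟨rfl, fun i => i.elim0⟩
    simp [this, Set.ncard_univ]
  | succ t ih =>
    obtain ⟨k, hk, hc'⟩ := hc.exists_adjacent_eq
    rw [ncard_wignerStar_succ (hw.eq_iff_of_adjacent hk), ih (hw.comp_skipPair hk) hc',
      ← pow_succ']

/-- For any Catalan word `w` of length `2t`,
`#Π*_{L_W,n}(w)/n^{t+1} → 1` as `n → ∞`. -/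
theorem wignerStar_catalan_limit (t : ℕ) (w : Fin (2 * t) → ℕ)
    (hw : PairMatched w) (hc : CatalanWord w) :
    Tendsto (fun n : ℕ => ((wignerStar t n w).ncard : ℝ) / (n : ℝ) ^ (t + 1))
      atTop (nhds 1) := by
  refine tendsto_const_nhds.congr' ?_
  filter_upwards [eventually_ge_atTop 1] with n hn
  have hpos : (n : ℝ) ^ (t + 1) ≠ 0 := pow_ne_zero _ (Nat.cast_ne_zero.2 (by omega))
  rw [ncard_wignerStar_of_catalan n hw hc, Nat.cast_pow, div_self hpos]
end

section
/- For the Toeplitz link function L_T and any Catalan word w of length 2t, lim_{n→∞} #Π*_{L_T,n}(w)/n^{t+1} = 1. -/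
open Filter Topology

/-!
Lower bound: deleting an adjacent double letter `aa` from a word corresponds to deleting an
excursion `u → x → u` from a closed walk, and such an excursion can be reinserted with `x`
arbitrary. Following the Catalan reduction, this gives at least `n^(t+1)` closed walks in which
the two increments of every letter cancel, and all of them lie in `Π*`.

Upper bound: in a circuit of `Π*` the two increments of a pair are equal or opposite. Let `S` be
the set of pairs where they are equal and nonzero. Since the increments sum to zero, so do those
indexed by `S`. Reading the circuit from left to right, it is therefore determined by `S`, `π(0)`
and the values `π(i+1)` at the generating vertices `i`, except at the last element of `S`. So the
fibre over `S = ∅` has at most `n^(t+1)` elements, and each of the other `2^t - 1` fibres at most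
`n^t`.
-/

def increment {m n : ℕ} (π : Fin (m + 1) → Fin n) (i : Fin m) : ℤ :=
  (π i.castSucc : ℤ) - (π i.succ : ℤ)

lemma sum_increment {m n : ℕ} (π : Fin (m + 1) → Fin n) :
    ∑ i, increment π i = (π 0 : ℤ) - π (Fin.last m) := by
  induction m with
  | zero => simp
  | succ m ih =>
    rw [Fin.sum_univ_castSucc]
    have := ih (fun i => π i.castSucc)
    simp only [increment, Fin.succ_castSucc] at this ⊢
    rw [this]
    simp

lemma Fin.funext_of_succ {α : Type*} {m : ℕ} {f g : Fin (m + 1) → α} (h0 : f 0 = g 0)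
    (hs : ∀ i : Fin m, (∀ k ≤ i.castSucc, f k = g k) → f i.succ = g i.succ) : f = g := by
  suffices h : ∀ i, ∀ k ≤ i, f k = g k from funext fun i => h i i le_rfl
  intro i
  induction i using Fin.induction with
  | zero => intro k hk; rwa [Fin.le_zero_iff.1 hk]
  | succ i ih =>
    intro k hk
    rcases hk.lt_or_eq with hk | rfl
    · exact ih k (Fin.le_castSucc_iff.2 hk)
    · exact hs i ih

instance {h : ℕ} (w : Fin h → ℕ) : DecidablePred (IsGen w) :=
  fun i => inferInstanceAs (Decidable (∀ j, w j = w i → i ≤ j))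

/-- The other position carrying the letter of `j` (junk value `j` if there is none). -/
noncomputable def partner {h : ℕ} (w : Fin h → ℕ) (j : Fin h) : Fin h :=
  if hx : ∃ i, i ≠ j ∧ w i = w j then hx.choose else j

namespace PairMatched

variable {h : ℕ} {w : Fin h → ℕ}

lemma exists_ne (hw : PairMatched w) (j : Fin h) : ∃ i, i ≠ j ∧ w i = w j := by
  obtain ⟨i, hi, hij⟩ := Finset.exists_mem_ne (by rw [hw j]; omega) j
  exact ⟨i, hij, (Finset.mem_filter.1 hi).2⟩

lemma eq_of_ne (hw : PairMatched w) {i j k : Fin h} (hik : i ≠ k) (hjk : j ≠ k)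
    (hi : w i = w k) (hj : w j = w k) : i = j := by
  by_contra hij
  have hsub : ({i, j, k} : Finset (Fin h)) ⊆ Finset.univ.filter fun l => w l = w k := by
    intro l hl
    simp only [Finset.mem_insert, Finset.mem_singleton] at hl
    rcases hl with rfl | rfl | rfl <;> simp [hi, hj]
  have := Finset.card_le_card hsub
  rw [hw k, Finset.card_eq_three.2 ⟨i, j, k, hij, hik, hjk, rfl⟩] at this
  omega

lemma partner_ne (hw : PairMatched w) (j : Fin h) : partner w j ≠ j := by
  rw [partner, dif_pos (hw.exists_ne j)]
  exact (hw.exists_ne j).choose_spec.1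

lemma apply_partner (hw : PairMatched w) (j : Fin h) : w (partner w j) = w j := by
  rw [partner, dif_pos (hw.exists_ne j)]
  exact (hw.exists_ne j).choose_spec.2

lemma eq_partner (hw : PairMatched w) {i j : Fin h} (hij : i ≠ j) (h : w i = w j) :
    i = partner w j :=
  hw.eq_of_ne hij (hw.partner_ne j) h (hw.apply_partner j)

lemma partner_partner (hw : PairMatched w) (j : Fin h) : partner w (partner w j) = j :=
  (hw.eq_partner (hw.partner_ne j).symm (hw.apply_partner j).symm).symm

lemma isGen_iff_lt_partner (hw : PairMatched w) (j : Fin h) : IsGen w j ↔ j < partner w j := by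
  refine ⟨fun hj => (hj _ (hw.apply_partner j)).lt_of_ne (hw.partner_ne j).symm, fun hj i hi => ?_⟩
  rcases eq_or_ne i j with rfl | hij
  · exact le_rfl
  · exact (hw.eq_partner hij hi ▸ hj).le

lemma isGen_partner_iff (hw : PairMatched w) (j : Fin h) :
    IsGen w (partner w j) ↔ ¬ IsGen w j := by
  rw [hw.isGen_iff_lt_partner, hw.isGen_iff_lt_partner, hw.partner_partner, not_lt]
  exact ⟨le_of_lt, fun hj => hj.lt_of_ne (hw.partner_ne j)⟩

lemma partner_lt (hw : PairMatched w) {j : Fin h} (hj : ¬ IsGen w j) : partner w j < j := by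
  simpa [hw.partner_partner] using (hw.isGen_iff_lt_partner _).1 ((hw.isGen_partner_iff j).2 hj)

lemma sum_eq_sum_isGen_add_partner {M : Type*} [AddCommMonoid M] (hw : PairMatched w)
    (f : Fin h → M) :
    ∑ i, f i = ∑ i ∈ Finset.univ.filter (IsGen w), (f i + f (partner w i)) := by
  rw [← Finset.sum_filter_add_sum_filter_not Finset.univ (IsGen w), Finset.sum_add_distrib]
  congr 1
  refine Finset.sum_nbij' (partner w) (partner w) ?_ ?_ ?_ ?_ ?_ <;>
    simp [hw.isGen_partner_iff, hw.partner_partner]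

lemma card_isGen {t : ℕ} {w : Fin (2 * t) → ℕ} (hw : PairMatched w) :
    (Finset.univ.filter (IsGen w)).card = t := by
  have := hw.sum_eq_sum_isGen_add_partner fun _ => 1
  simp only [Finset.sum_const, Finset.card_univ, Fintype.card_fin, smul_eq_mul] at this
  omega

lemma natAbs_eq_of_sum_eq_zero (hw : PairMatched w) (d : Fin h → ℤ)
    (hd : ∀ a, ∑ k, (if w k = a then d k else 0) = 0) {i j : Fin h} (hij : w i = w j) :
    (d i).natAbs = (d j).natAbs := by
  rcases eq_or_ne i j with rfl | hne
  · rfl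
  have hsub : ({i, j} : Finset (Fin h)) ⊆ Finset.univ.filter fun k => w k = w j := by
    intro k hk
    simp only [Finset.mem_insert, Finset.mem_singleton] at hk
    rcases hk with rfl | rfl <;> simp [hij]
  have hpair := (Finset.eq_of_subset_of_card_le hsub (by rw [hw j, Finset.card_pair hne])).symm
  have := hd (w j)
  rw [← Finset.sum_filter, hpair, Finset.sum_pair hne] at this
  omega

end PairMatched

def increments {n : ℕ} : List (Fin n) → List ℤ
  | a :: b :: q => ((a : ℤ) - b) :: increments (b :: q)
  | _ => []

lemma length_increments {n : ℕ} (p : List (Fin n)) : (increments p).length = p.length - 1 := by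
  induction p with
  | nil => rfl
  | cons a q ih => cases q with
    | nil => rfl
    | cons b q => simp [increments, ih]

lemma increments_append_cons {n : ℕ} (p : List (Fin n)) (u : Fin n) (q : List (Fin n)) :
    increments (p ++ u :: q) = increments (p ++ [u]) ++ increments (u :: q) := by
  induction p with
  | nil => rfl
  | cons a p ih => cases p with
    | nil => rfl
    | cons b p => simpa [increments] using ih

lemma increments_ofFn {m n : ℕ} (π : Fin (m + 1) → Fin n) :
    increments (List.ofFn π) = List.ofFn (increment π) := by
  induction m with
  | zero => rfl
  | succ m ih =>
    have := ih fun i => π i.succ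
    rw [List.ofFn_succ] at this
    rw [List.ofFn_succ, List.ofFn_succ, List.ofFn_succ, increments, this]
    congr 1

lemma List.zipWith_ofFn {α β γ : Type*} {m : ℕ} (f : α → β → γ) (u : Fin m → α) (v : Fin m → β) :
    List.zipWith f (List.ofFn u) (List.ofFn v) = List.ofFn fun i => f (u i) (v i) :=
  List.ext_getElem (by simp) (by simp)

def IsBalanced (l : List ℕ) (d : List ℤ) : Prop :=
  ∀ a, (List.zipWith (fun b z => if b = a then z else 0) l d).sum = 0

lemma IsBalanced.insert_pair {l₁ l₂ : List ℕ} {d₁ d₂ : List ℤ}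
    (h : IsBalanced (l₁ ++ l₂) (d₁ ++ d₂)) (hd : l₁.length = d₁.length) (a : ℕ) {z z' : ℤ}
    (hz : z + z' = 0) : IsBalanced (l₁ ++ a :: a :: l₂) (d₁ ++ z :: z' :: d₂) := by
  intro b
  have := h b
  rw [List.zipWith_append hd] at this ⊢
  simp only [List.sum_append, List.zipWith_cons_cons, List.sum_cons] at this ⊢
  split_ifs <;> linarith

def closedWalks (n : ℕ) (l : List ℕ) : Set (List (Fin n)) :=
  {p | p.length = l.length + 1 ∧ p.head? = p.getLast? ∧ IsBalanced l (increments p)}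

lemma finite_closedWalks (n : ℕ) (l : List ℕ) : (closedWalks n l).Finite :=
  (List.finite_length_eq _ _).subset fun _ hp => hp.1

def insertExcursion {α : Type*} (k : ℕ) (x : α) (p : List α) : List α :=
  p.take (k + 1) ++ x :: p.drop k

lemma insertExcursion_append_cons {α : Type*} {p₀ : List α} (u x : α) (p₂ : List α) :
    insertExcursion p₀.length x (p₀ ++ u :: p₂) = p₀ ++ u :: x :: u :: p₂ := by
  simp [insertExcursion, List.take_append]

lemma List.exists_eq_append_cons_of_lt {α : Type*} {p : List α} {k : ℕ} (hk : k < p.length) :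
    ∃ p₀ u p₂, p = p₀ ++ u :: p₂ ∧ p₀.length = k :=
  ⟨p.take k, p[k], p.drop (k + 1), by rw [← List.drop_eq_getElem_cons, List.take_append_drop],
    by simp; omega⟩

lemma insertExcursion_inj {α : Type*} {k : ℕ} {x y : α} {p q : List α} (hp : k < p.length)
    (hq : k < q.length) (h : insertExcursion k x p = insertExcursion k y q) : x = y ∧ p = q := by
  obtain ⟨p₀, u, p₂, rfl, rfl⟩ := List.exists_eq_append_cons_of_lt hp
  obtain ⟨q₀, v, q₂, rfl, hq₀⟩ := List.exists_eq_append_cons_of_lt hq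
  rw [insertExcursion_append_cons, ← hq₀, insertExcursion_append_cons] at h
  obtain ⟨rfl, h⟩ := List.append_inj h hq₀.symm
  simp_all

lemma insertExcursion_mem_closedWalks {n : ℕ} {l₁ l₂ : List ℕ} {p : List (Fin n)}
    (hp : p ∈ closedWalks n (l₁ ++ l₂)) (a : ℕ) (x : Fin n) :
    insertExcursion l₁.length x p ∈ closedWalks n (l₁ ++ a :: a :: l₂) := by
  obtain ⟨hlen, hclosed, hbal⟩ := hp
  obtain ⟨p₀, u, p₂, rfl, hp₀⟩ := List.exists_eq_append_cons_of_lt (k := l₁.length) (p := p)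
    (by simp at hlen ⊢; omega)
  rw [← hp₀, insertExcursion_append_cons]
  refine ⟨by simp at hlen ⊢; omega, ?_, ?_⟩
  · have hhead : (p₀ ++ u :: x :: u :: p₂).head? = (p₀ ++ u :: p₂).head? := by cases p₀ <;> rfl
    rw [hhead, hclosed]
    simp [List.getLast?_append]
  · rw [increments_append_cons] at hbal ⊢
    exact hbal.insert_pair (by simp [length_increments, hp₀]) a (by simp)

lemma mul_ncard_closedWalks_le (n : ℕ) (l₁ l₂ : List ℕ) (a : ℕ) :
    n * (closedWalks n (l₁ ++ l₂)).ncard ≤ (closedWalks n (l₁ ++ a :: a :: l₂)).ncard := by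
  have hinj : Set.InjOn (fun q : Fin n × List (Fin n) => insertExcursion l₁.length q.1 q.2)
      (Set.univ ×ˢ closedWalks n (l₁ ++ l₂)) := by
    rintro ⟨x, p⟩ ⟨-, hp, -, -⟩ ⟨y, q⟩ ⟨-, hq, -, -⟩ he
    simp only [List.length_append] at hp hq
    obtain ⟨rfl, rfl⟩ := insertExcursion_inj (p := p) (q := q) (by omega) (by omega) he
    rfl
  calc n * (closedWalks n (l₁ ++ l₂)).ncard
      = (Set.univ ×ˢ closedWalks n (l₁ ++ l₂)).ncard := by
        rw [Set.ncard_prod, Set.ncard_univ, Nat.card_eq_fintype_card, Fintype.card_fin]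
    _ ≤ _ := Set.ncard_le_ncard_of_injOn _ (fun q hq => insertExcursion_mem_closedWalks hq.2 a q.1)
        hinj (finite_closedWalks n _)

lemma le_ncard_closedWalks_nil (n : ℕ) : n ≤ (closedWalks n []).ncard := by
  calc n = (Set.univ : Set (Fin n)).ncard := by simp
    _ ≤ _ := Set.ncard_le_ncard_of_injOn (fun x => [x])
        (fun x _ => show [x] ∈ closedWalks n [] from ⟨rfl, rfl, fun _ => rfl⟩)
        (fun _ _ _ _ h => List.singleton_inj.1 h) (finite_closedWalks n [])

lemma CatalanReducible.pow_le_ncard_closedWalks {l : List ℕ} (hl : CatalanReducible l) (n : ℕ) :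
    n ^ (l.length / 2 + 1) ≤ (closedWalks n l).ncard := by
  induction hl with
  | nil => simpa using le_ncard_closedWalks_nil n
  | step l₁ l₂ a _ ih =>
    have hlen : (l₁ ++ a :: a :: l₂).length / 2 + 1 = (l₁ ++ l₂).length / 2 + 1 + 1 := by
      simp; omega
    rw [hlen, pow_succ']
    exact (Nat.mul_le_mul_left n ih).trans (mul_ncard_closedWalks_le n l₁ l₂ a)

lemma mem_toepStar_of_ofFn_mem_closedWalks {t n : ℕ} {w : Fin (2 * t) → ℕ} (hw : PairMatched w)
    {π : Fin (2 * t + 1) → Fin n} (h : List.ofFn π ∈ closedWalks n (List.ofFn w)) :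
    π ∈ toepStar t n w := by
  obtain ⟨-, hclosed, hbal⟩ := h
  refine ⟨?_, fun i j hij => hw.natAbs_eq_of_sum_eq_zero (increment π) (fun a => ?_) hij⟩
  · have hhead : (List.ofFn π).head? = some (π 0) := by simp [List.ofFn_succ]
    have hlast : (List.ofFn π).getLast? = some (π (Fin.last _)) := by
      rw [List.ofFn_succ']
      simp
    rw [hhead, hlast] at hclosed
    exact Option.some.inj hclosed
  · have := hbal a
    rwa [increments_ofFn, List.zipWith_ofFn, List.sum_ofFn] at this

lemma ncard_closedWalks_le_ncard_toepStar {t n : ℕ} {w : Fin (2 * t) → ℕ} (hw : PairMatched w) :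
    (closedWalks n (List.ofFn w)).ncard ≤ (toepStar t n w).ncard := by
  have hsub : closedWalks n (List.ofFn w) ⊆ List.ofFn '' toepStar t n w := by
    intro p hp
    have hlen : p.length = 2 * t + 1 := by simpa using hp.1
    have hp' : List.ofFn (fun i : Fin (2 * t + 1) => p[i.1]) = p :=
      List.ext_getElem (by simp [hlen]) fun _ _ _ => List.getElem_ofFn ..
    exact ⟨_, mem_toepStar_of_ofFn_mem_closedWalks hw (by rwa [hp']), hp'⟩
  exact (Set.ncard_le_ncard hsub (Set.toFinite _)).trans (Set.ncard_image_le (Set.toFinite _))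

lemma pow_le_ncard_toepStar {t n : ℕ} {w : Fin (2 * t) → ℕ} (hw : PairMatched w)
    (hc : CatalanWord w) : n ^ (t + 1) ≤ (toepStar t n w).ncard := by
  have := CatalanReducible.pow_le_ncard_closedWalks hc n
  rw [List.length_ofFn, Nat.mul_div_cancel_left t two_pos] at this
  exact this.trans (ncard_closedWalks_le_ncard_toepStar hw)

/-- For `π ∈ toepStar`, the two increments of a pair are equal or opposite; this records the
pairs (by their generating vertex) where they are equal and nonzero. -/
noncomputable def sameSignGens {h n : ℕ} (w : Fin h → ℕ) (π : Fin (h + 1) → Fin n) :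
    Finset (Fin h) :=
  Finset.univ.filter fun i => IsGen w i ∧ increment π (partner w i) ≠ -increment π i

lemma sameSignGens_subset {h n : ℕ} {w : Fin h → ℕ} {π : Fin (h + 1) → Fin n} :
    sameSignGens w π ⊆ Finset.univ.filter (IsGen w) :=
  Finset.monotone_filter_right _ fun _ _ => And.left

/-- All generating vertices except the last element of `S` (`S.max = ⊥` when `S = ∅`). -/
def freeGens {h : ℕ} (w : Fin h → ℕ) (S : Finset (Fin h)) : Finset (Fin h) :=
  Finset.univ.filter fun i => IsGen w i ∧ (i : WithBot (Fin h)) ≠ S.max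

lemma ncard_le_pow_of_determined {m n : ℕ} (A : Set (Fin (m + 1) → Fin n)) (G : Finset (Fin m))
    (hA : ∀ π ∈ A, ∀ π' ∈ A, π 0 = π' 0 → (∀ i ∈ G, π i.succ = π' i.succ) → π = π') :
    A.ncard ≤ n ^ (G.card + 1) := by
  calc A.ncard ≤ (Set.univ : Set (Fin n × (G → Fin n))).ncard :=
        Set.ncard_le_ncard_of_injOn (fun π => (π 0, fun i => π i.1.succ))
          (fun _ _ => Set.mem_univ _) (fun π hπ π' hπ' he => hA π hπ π' hπ'
            (congrArg Prod.fst he) fun i hi => congrFun (congrArg Prod.snd he) ⟨i, hi⟩)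
    _ = n ^ (G.card + 1) := by
        rw [Set.ncard_univ, Nat.card_eq_fintype_card, Fintype.card_prod, Fintype.card_fun,
          Fintype.card_coe, Fintype.card_fin, pow_succ']

section UpperBound

variable {t n : ℕ} {w : Fin (2 * t) → ℕ} {π π' : Fin (2 * t + 1) → Fin n}

lemma increment_partner (hw : PairMatched w) (hπ : π ∈ toepStar t n w) {i : Fin (2 * t)}
    (hi : IsGen w i) :
    increment π (partner w i) = if i ∈ sameSignGens w π then increment π i else -increment π i := by
  have habs : (increment π (partner w i)).natAbs = (increment π i).natAbs :=
    hπ.2 _ _ (hw.apply_partner i)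
  rw [Int.natAbs_eq_natAbs_iff] at habs
  simp only [sameSignGens, Finset.mem_filter, Finset.mem_univ, true_and, hi]
  split_ifs with h <;> tauto

lemma sum_sameSignGens_increment (hw : PairMatched w) (hπ : π ∈ toepStar t n w) :
    ∑ i ∈ sameSignGens w π, increment π i = 0 := by
  have htotal : ∑ i, increment π i = 0 := by rw [sum_increment, hπ.1, sub_self]
  rw [hw.sum_eq_sum_isGen_add_partner] at htotal
  have hpairs : ∑ i ∈ Finset.univ.filter (IsGen w), (increment π i + increment π (partner w i))
      = ∑ i ∈ Finset.univ.filter (IsGen w),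
          if i ∈ sameSignGens w π then 2 * increment π i else 0 :=
    Finset.sum_congr rfl fun i hi => by
      rw [increment_partner hw hπ (Finset.mem_filter.1 hi).2]
      split_ifs <;> ring
  rw [hpairs, Finset.sum_ite_mem, Finset.inter_eq_right.2 sameSignGens_subset,
    ← Finset.mul_sum] at htotal
  omega

lemma increment_eq_of_not_isGen (hw : PairMatched w) (hπ : π ∈ toepStar t n w)
    (hπ' : π' ∈ toepStar t n w) (hS : sameSignGens w π = sameSignGens w π') {j : Fin (2 * t)}
    (hj : ¬ IsGen w j) (hp : increment π (partner w j) = increment π' (partner w j)) :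
    increment π j = increment π' j := by
  have hg : IsGen w (partner w j) := (hw.isGen_partner_iff j).2 hj
  have e := increment_partner hw hπ hg
  have e' := increment_partner hw hπ' hg
  rw [hw.partner_partner] at e e'
  rw [e, e', hS, hp]

lemma increment_eq_of_max (hw : PairMatched w) (hπ : π ∈ toepStar t n w)
    (hπ' : π' ∈ toepStar t n w) (hS : sameSignGens w π = sameSignGens w π') {j : Fin (2 * t)}
    (hmax : (sameSignGens w π).max = j) (hlt : ∀ k < j, increment π k = increment π' k) :
    increment π j = increment π' j := by
  have hj := Finset.mem_of_max hmax
  have h := sum_sameSignGens_increment hw hπ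
  have h' := sum_sameSignGens_increment hw hπ'
  rw [← hS, ← Finset.add_sum_erase _ _ hj] at h'
  rw [← Finset.add_sum_erase _ _ hj] at h
  have hrest : ∑ k ∈ (sameSignGens w π).erase j, increment π k
      = ∑ k ∈ (sameSignGens w π).erase j, increment π' k :=
    Finset.sum_congr rfl fun k hk => hlt k <|
      (Finset.le_max_of_eq (Finset.mem_of_mem_erase hk) hmax).lt_of_ne (Finset.ne_of_mem_erase hk)
  omega

lemma eq_of_sameSignGens_eq (hw : PairMatched w) (hπ : π ∈ toepStar t n w)
    (hπ' : π' ∈ toepStar t n w) (hS : sameSignGens w π = sameSignGens w π') (h0 : π 0 = π' 0)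
    (hfree : ∀ i ∈ freeGens w (sameSignGens w π), π i.succ = π' i.succ) : π = π' := by
  refine Fin.funext_of_succ h0 fun j hle => ?_
  have hlt : ∀ k < j, increment π k = increment π' k := fun k hk => by
    rw [increment, increment, hle k.castSucc (Fin.castSucc_le_castSucc_iff.2 hk.le),
      hle k.succ (Fin.le_castSucc_iff.2 (Fin.succ_lt_succ_iff.2 hk))]
  by_cases hj : j ∈ freeGens w (sameSignGens w π)
  · exact hfree j hj
  have hD : increment π j = increment π' j := by
    by_cases hg : IsGen w j
    · exact increment_eq_of_max hw hπ hπ' hS (by simpa [freeGens, hg, eq_comm] using hj) hlt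
    · exact increment_eq_of_not_isGen hw hπ hπ' hS hg (hlt _ (hw.partner_lt hg))
  have hc := hle j.castSucc le_rfl
  rw [increment, increment, hc] at hD
  exact Fin.ext (by omega)

lemma card_freeGens_empty (hw : PairMatched w) : (freeGens w ∅).card = t := by
  simpa [freeGens] using hw.card_isGen

lemma card_freeGens_add_one (hw : PairMatched w) {S : Finset (Fin (2 * t))}
    (hS : S ⊆ Finset.univ.filter (IsGen w)) (hne : S.Nonempty) : (freeGens w S).card + 1 = t := by
  obtain ⟨m, hm⟩ := Finset.max_of_nonempty hne
  have : freeGens w S = (Finset.univ.filter (IsGen w)).erase m := by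
    ext i
    simp [freeGens, hm, and_comm]
  rw [this, Finset.card_erase_add_one (hS (Finset.mem_of_max hm)), hw.card_isGen]

lemma ncard_sameSignGens_fiber_le (hw : PairMatched w) (S : Finset (Fin (2 * t))) :
    {π | π ∈ toepStar t n w ∧ sameSignGens w π = S}.ncard ≤ n ^ ((freeGens w S).card + 1) :=
  ncard_le_pow_of_determined _ _ fun _ hπ _ hπ' h0 hfree =>
    eq_of_sameSignGens_eq hw hπ.1 hπ'.1 (hπ.2.trans hπ'.2.symm) h0 (hπ.2 ▸ hfree)

lemma ncard_toepStar_le (hw : PairMatched w) :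
    (toepStar t n w).ncard ≤ n ^ (t + 1) + 2 ^ t * n ^ t := by
  set gens := Finset.univ.filter (IsGen w)
  set fiber := fun S => {π | π ∈ toepStar t n w ∧ sameSignGens w π = S}
  have hcover : toepStar t n w ⊆ ⋃ S ∈ gens.powerset, fiber S := fun π hπ =>
    Set.mem_biUnion (Finset.mem_powerset.2 sameSignGens_subset) ⟨hπ, rfl⟩
  have hfiber : ∀ S ∈ gens.powerset.erase ∅, (fiber S).ncard ≤ n ^ t := fun S hS => by
    obtain ⟨hne, hsub⟩ := Finset.mem_erase.1 hS
    have := ncard_sameSignGens_fiber_le hw S (n := n)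
    rwa [card_freeGens_add_one hw (Finset.mem_powerset.1 hsub)
      (Finset.nonempty_iff_ne_empty.2 hne)] at this
  calc (toepStar t n w).ncard ≤ ∑ S ∈ gens.powerset, (fiber S).ncard :=
        (Set.ncard_le_ncard hcover (Set.toFinite _)).trans (Finset.set_ncard_biUnion_le _ _)
    _ = (fiber ∅).ncard + ∑ S ∈ gens.powerset.erase ∅, (fiber S).ncard :=
        (Finset.add_sum_erase _ _ (Finset.empty_mem_powerset _)).symm
    _ ≤ n ^ (t + 1) + (gens.powerset.erase ∅).card * n ^ t := by
        gcongr
        · simpa [card_freeGens_empty hw] using ncard_sameSignGens_fiber_le hw ∅ (n := n)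
        · simpa using Finset.sum_le_card_nsmul _ _ _ hfiber
    _ ≤ n ^ (t + 1) + 2 ^ t * n ^ t := by
        gcongr
        calc _ ≤ gens.powerset.card := Finset.card_erase_le
          _ = 2 ^ t := by rw [Finset.card_powerset, hw.card_isGen]

end UpperBound

lemma tendsto_div_pow_of_le {a : ℕ → ℕ} {t C : ℕ} (hlow : ∀ n, n ^ (t + 1) ≤ a n)
    (hup : ∀ n, a n ≤ n ^ (t + 1) + C * n ^ t) :
    Tendsto (fun n : ℕ => (a n : ℝ) / (n : ℝ) ^ (t + 1)) atTop (𝓝 1) := by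
  have hbound : Tendsto (fun n : ℕ => 1 + (C : ℝ) / n) atTop (𝓝 1) := by
    simpa using tendsto_const_nhds.add (tendsto_const_div_atTop_nhds_zero_nat (C : ℝ))
  refine tendsto_of_tendsto_of_tendsto_of_le_of_le' tendsto_const_nhds hbound ?_ ?_ <;>
    filter_upwards [eventually_gt_atTop 0] with n hn <;>
    have hpos : (0 : ℝ) < (n : ℝ) ^ (t + 1) := by positivity
  · rw [le_div_iff₀ hpos, one_mul]
    exact_mod_cast hlow n
  · rw [div_le_iff₀ hpos]
    calc (a n : ℝ) ≤ (n : ℝ) ^ (t + 1) + C * (n : ℝ) ^ t := by exact_mod_cast hup n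
      _ = (1 + C / n) * (n : ℝ) ^ (t + 1) := by field_simp; ring

/-- For any Catalan word `w` of length `2t`,
`#Π*_{L_T,n}(w)/n^{t+1} → 1` as `n → ∞`. -/
theorem toepStar_catalan_limit (t : ℕ) (w : Fin (2 * t) → ℕ)
    (hw : PairMatched w) (hc : CatalanWord w) :
    Tendsto (fun n : ℕ => ((toepStar t n w).ncard : ℝ) / (n : ℝ) ^ (t + 1))
      atTop (nhds 1) :=
  tendsto_div_pow_of_le (fun _ => pow_le_ncard_toepStar hw hc) (fun _ => ncard_toepStar_le hw)
end

section
/- For the block Toeplitz matrix with Toeplitz blocks and any pair-matched word w of length 2t, for all n and k one has (#Π*_{L_T,n,l_0}(w))·(#Π*_{L_T,k,l_0}(w)) ≤ #Π*_{L,nk}(w) ≤ (#Π*_{L_T,n}(w))·(#Π*_{L_T,k}(w)), where L is the link function of the nk × nk block matrix. -/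
open Filter Topology

/-- For a circuit `π` on `{1,…,nk}` (coded by `Fin (n*k)`) and a step `i`, the
block-level Toeplitz increment: difference of block addresses `⌈·/n⌉`. -/
def blockDiff {t n k : ℕ} (π : Fin (2 * t + 1) → Fin (n * k)) (i : Fin (2 * t)) : ℤ :=
  ((π i.castSucc : ℕ) / n : ℤ) - ((π i.succ : ℕ) / n : ℤ)

/-- The entry-level Toeplitz increment: difference of within-block addresses. -/
def entryDiff {t n k : ℕ} (π : Fin (2 * t + 1) → Fin (n * k)) (i : Fin (2 * t)) : ℤ :=
  ((π i.castSucc : ℕ) % n : ℤ) - ((π i.succ : ℕ) % n : ℤ)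

/-- `Π*_{L,nk}(w)` for the `nk × nk` Toeplitz block matrix with (asymmetric)
Toeplitz blocks: circuits with `π(0) = π(2t)` such that matching letters of `w`
force the block-level and entry-level Toeplitz constraints to hold
simultaneously, with matching signs. -/
def tbtStar (t n k : ℕ) (w : Fin (2 * t) → ℕ) : Set (Fin (2 * t + 1) → Fin (n * k)) :=
  {π | π 0 = π (Fin.last (2 * t)) ∧ ∀ i j : Fin (2 * t), w i = w j →
    (blockDiff π i = blockDiff π j ∧ entryDiff π i = entryDiff π j) ∨
    (blockDiff π i = -blockDiff π j ∧ entryDiff π i = -entryDiff π j)}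

/-!
A circuit on `{1,…,nk}` is the same thing as a pair of circuits, one on the entries
`{1,…,n}` (the index modulo `n`) and one on the blocks `{1,…,k}` (the index divided by `n`);
under this correspondence the entry- and block-level increments of the big circuit are the
increments of the two components. The Toeplitz-block-Toeplitz constraint forces equal absolute
increments in each component, which gives the upper bound. Conversely, if both components
satisfy the `l₀`-signed constraint, the increment at every position of a letter is `±` the
increment at its generating vertex, with the sign depending only on the position; so the two
components flip sign together and the pair satisfies the block constraint, which gives the
lower bound.
-/

section BlockIndex

variable {n k : ℕ}

def blockIndexEquiv (n k : ℕ) : Fin n × Fin k ≃ Fin (n * k) :=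
  (Equiv.prodComm _ _).trans (finProdFinEquiv.trans (finCongr (Nat.mul_comm k n)))

lemma blockIndexEquiv_val (p : Fin n × Fin k) :
    (blockIndexEquiv n k p : ℕ) = p.1 + n * p.2 := rfl

lemma blockIndexEquiv_val_div (p : Fin n × Fin k) : (blockIndexEquiv n k p : ℕ) / n = p.2 := by
  rw [blockIndexEquiv_val, Nat.add_mul_div_left _ _ p.1.pos, Nat.div_eq_of_lt p.1.isLt,
    Nat.zero_add]

lemma blockIndexEquiv_val_mod (p : Fin n × Fin k) : (blockIndexEquiv n k p : ℕ) % n = p.1 := by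
  rw [blockIndexEquiv_val, Nat.add_mul_mod_self_left, Nat.mod_eq_of_lt p.1.isLt]

end BlockIndex

def stepDiff {s m : ℕ} (π : Fin (s + 1) → Fin m) (i : Fin s) : ℤ :=
  (π i.castSucc : ℤ) - (π i.succ : ℤ)

def blockCircuitEquiv (ι : Type*) (n k : ℕ) : (ι → Fin n) × (ι → Fin k) ≃ (ι → Fin (n * k)) :=
  (Equiv.arrowProdEquivProdArrow ι _ _).symm.trans
    (Equiv.piCongrRight fun _ => blockIndexEquiv n k)

lemma blockCircuitEquiv_apply {ι : Type*} {n k : ℕ} (p : (ι → Fin n) × (ι → Fin k)) (x : ι) :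
    blockCircuitEquiv ι n k p x = blockIndexEquiv n k (p.1 x, p.2 x) := rfl

section BlockCircuit

variable {t n k : ℕ} (p : (Fin (2 * t + 1) → Fin n) × (Fin (2 * t + 1) → Fin k))

lemma blockDiff_blockCircuitEquiv (i : Fin (2 * t)) :
    blockDiff (blockCircuitEquiv _ n k p) i = stepDiff p.2 i := by
  simp only [blockDiff, stepDiff, blockCircuitEquiv_apply, ← Int.natCast_div,
    blockIndexEquiv_val_div]

lemma entryDiff_blockCircuitEquiv (i : Fin (2 * t)) :
    entryDiff (blockCircuitEquiv _ n k p) i = stepDiff p.1 i := by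
  simp only [entryDiff, stepDiff, blockCircuitEquiv_apply, ← Int.natCast_mod,
    blockIndexEquiv_val_mod]

end BlockCircuit

lemma exists_isGen {h : ℕ} (w : Fin h → ℕ) (i : Fin h) : ∃ g, IsGen w g ∧ w g = w i := by
  obtain ⟨g, hg, hmin⟩ := (Finset.univ.filter fun j => w j = w i).exists_min_image id
    ⟨i, by simp⟩
  refine ⟨g, fun j hj => hmin j ?_, (Finset.mem_filter.mp hg).2⟩
  simpa [(Finset.mem_filter.mp hg).2] using hj

lemma stepDiff_eq_of_mem_toepStarSigned {t n : ℕ} {w : Fin (2 * t) → ℕ}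
    {π : Fin (2 * t + 1) → Fin n} (hπ : π ∈ toepStarSigned t n w (fun _ => -1))
    {g a : Fin (2 * t)} (hg : IsGen w g) (ha : w a = w g) :
    stepDiff π a = if a = g then stepDiff π g else -stepDiff π g := by
  split_ifs with hag
  · rw [hag]
  · have h : stepDiff π g = -1 * stepDiff π a := hπ.2 g a hg (Ne.symm hag) ha
    linarith

lemma natAbs_eq_and_natAbs_eq_of_eq_or_eq_neg {a b c d : ℤ}
    (h : (a = b ∧ c = d) ∨ (a = -b ∧ c = -d)) : a.natAbs = b.natAbs ∧ c.natAbs = d.natAbs := by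
  rcases h with ⟨rfl, rfl⟩ | ⟨rfl, rfl⟩ <;> simp

section Sandwich

variable {t n k : ℕ} {w : Fin (2 * t) → ℕ}
  {p : (Fin (2 * t + 1) → Fin n) × (Fin (2 * t + 1) → Fin k)}

lemma blockCircuitEquiv_closed_iff :
    blockCircuitEquiv _ n k p 0 = blockCircuitEquiv _ n k p (Fin.last (2 * t)) ↔
      p.1 0 = p.1 (Fin.last (2 * t)) ∧ p.2 0 = p.2 (Fin.last (2 * t)) := by
  simp only [blockCircuitEquiv_apply, Equiv.apply_eq_iff_eq, Prod.mk.injEq]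

lemma mem_toepStar_prod_of_blockCircuitEquiv_mem_tbtStar
    (hp : blockCircuitEquiv _ n k p ∈ tbtStar t n k w) :
    p ∈ toepStar t n w ×ˢ toepStar t k w := by
  obtain ⟨hclosed, hmatch⟩ := hp
  obtain ⟨hclosed₁, hclosed₂⟩ := blockCircuitEquiv_closed_iff.mp hclosed
  have habs := fun i j hij => natAbs_eq_and_natAbs_eq_of_eq_or_eq_neg <| by
    simpa only [blockDiff_blockCircuitEquiv, entryDiff_blockCircuitEquiv] using hmatch i j hij
  exact ⟨⟨hclosed₁, fun i j hij => (habs i j hij).2⟩, ⟨hclosed₂, fun i j hij => (habs i j hij).1⟩⟩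

lemma blockCircuitEquiv_mem_tbtStar
    (hp : p ∈ toepStarSigned t n w (fun _ => -1) ×ˢ toepStarSigned t k w (fun _ => -1)) :
    blockCircuitEquiv _ n k p ∈ tbtStar t n k w := by
  obtain ⟨hp₁, hp₂⟩ := hp
  refine ⟨blockCircuitEquiv_closed_iff.mpr ⟨hp₁.1.1, hp₂.1.1⟩, fun i j hij => ?_⟩
  obtain ⟨g, hg, hgi⟩ := exists_isGen w i
  simp only [blockDiff_blockCircuitEquiv, entryDiff_blockCircuitEquiv,
    stepDiff_eq_of_mem_toepStarSigned hp₁ hg hgi.symm,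
    stepDiff_eq_of_mem_toepStarSigned hp₁ hg (hgi.trans hij).symm,
    stepDiff_eq_of_mem_toepStarSigned hp₂ hg hgi.symm,
    stepDiff_eq_of_mem_toepStarSigned hp₂ hg (hgi.trans hij).symm]
  split_ifs <;> simp

end Sandwich

theorem tbtStar_sandwich_general (t n k : ℕ) (w : Fin (2 * t) → ℕ) :
    (toepStarSigned t n w (fun _ => -1)).ncard *
        (toepStarSigned t k w (fun _ => -1)).ncard ≤ (tbtStar t n k w).ncard ∧
    (tbtStar t n k w).ncard ≤ (toepStar t n w).ncard * (toepStar t k w).ncard := by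
  constructor
  · rw [← Set.ncard_prod]
    exact Set.ncard_le_ncard_of_injOn _ (fun p hp => blockCircuitEquiv_mem_tbtStar hp)
      (blockCircuitEquiv _ n k).injective.injOn
  · rw [← Set.ncard_prod]
    refine Set.ncard_le_ncard_of_injOn (blockCircuitEquiv _ n k).symm (fun π hπ => ?_)
      (blockCircuitEquiv _ n k).symm.injective.injOn
    apply mem_toepStar_prod_of_blockCircuitEquiv_mem_tbtStar
    rwa [Equiv.apply_symm_apply]

/-- Sandwich for the Toeplitz-block-Toeplitz circuit counts: for every
pair-matched word `w` of length `2t` and all `n, k`,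
`#Π*_{L_T,n,l₀}(w) · #Π*_{L_T,k,l₀}(w) ≤ #Π*_{L,nk}(w) ≤ #Π*_{L_T,n}(w) · #Π*_{L_T,k}(w)`,
where `l₀ = (−1,…,−1)`. -/
theorem tbtStar_sandwich (t n k : ℕ) (w : Fin (2 * t) → ℕ) (hw : PairMatched w) :
    (toepStarSigned t n w (fun _ => -1)).ncard *
        (toepStarSigned t k w (fun _ => -1)).ncard ≤ (tbtStar t n k w).ncard ∧
    (tbtStar t n k w).ncard ≤ (toepStar t n w).ncard * (toepStar t k w).ncard :=
  tbtStar_sandwich_general t n k w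
end
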